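/- arXiv:2206.07279 — 3 statements merged into one kernel-verified Lean document; each statement's English description precedes it below -/
import Mathlib

section
/- Let d, k ≥ 1, let M be a real d×d matrix, let x_1, …, x_k ∈ ℝ^d, and let ε, τ ≥ 0. Suppose ‖M − Σ_{i=1}^k x_i x_iᵀ‖ ≤ ε, and let P be a real d×d orthogonal projection matrix (P = Pᵀ = P²) such that ‖(I − P)M‖ ≤ τ. Then for every i ∈ {1, …, k}, ‖(I − P)x_i‖² ≤ ε + τ. -/
open Matrix
noncomputable def enorm {ι : Type*} [Fintype ι] (v : ι → ℝ) : ℝ :=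
  Real.sqrt (∑ i, v i ^ 2)
noncomputable def opNorm {ι κ : Type*} [Fintype ι] [Fintype κ] [DecidableEq κ]
    (A : Matrix ι κ ℝ) : ℝ :=
  ‖LinearMap.toContinuousLinearMap (Matrix.toEuclideanLin A)‖

lemma enorm_eq {ι : Type*} [Fintype ι] (v : ι → ℝ) :
    _root_.enorm v = ‖(WithLp.equiv 2 (ι → ℝ)).symm v‖ := by
  rw [EuclideanSpace.norm_eq, _root_.enorm]
  congr 1; apply Finset.sum_congr rfl; intro i _
  simp [sq_abs]

lemma enorm_sq {ι : Type*} [Fintype ι] (v : ι → ℝ) : _root_.enorm v ^ 2 = v ⬝ᵥ v := by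
  rw [_root_.enorm, Real.sq_sqrt (by positivity)]
  simp [dotProduct, sq]

lemma enorm_nonneg {ι : Type*} [Fintype ι] (v : ι → ℝ) : 0 ≤ _root_.enorm v :=
  Real.sqrt_nonneg _

lemma mulVec_enorm_le {ι κ : Type*} [Fintype ι] [Fintype κ] [DecidableEq κ]
    (A : Matrix ι κ ℝ) (v : κ → ℝ) : _root_.enorm (A.mulVec v) ≤ opNorm A * _root_.enorm v := by
  rw [enorm_eq, enorm_eq]
  exact (LinearMap.toContinuousLinearMap (Matrix.toEuclideanLin A)).le_opNorm ((WithLp.equiv 2 (κ → ℝ)).symm v)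

lemma abs_dot_le {ι : Type*} [Fintype ι] (u v : ι → ℝ) :
    |u ⬝ᵥ v| ≤ _root_.enorm u * _root_.enorm v := by
  have := @abs_real_inner_le_norm (EuclideanSpace ℝ ι) _ _
    ((WithLp.equiv 2 (ι → ℝ)).symm u) ((WithLp.equiv 2 (ι → ℝ)).symm v)
  rw [enorm_eq, enorm_eq]
  have h : u ⬝ᵥ v = inner ℝ ((WithLp.equiv 2 (ι → ℝ)).symm u) ((WithLp.equiv 2 (ι → ℝ)).symm v) := by
    simp [dotProduct, PiLp.inner_apply, RCLike.inner_apply, mul_comm]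
  rw [h]; exact this

lemma sum_mulVec' {ι κ : Type*} [Fintype ι] [Fintype κ] (f : κ → Matrix ι ι ℝ) (v : ι → ℝ) :
    (∑ j, f j) *ᵥ v = ∑ j, (f j) *ᵥ v := by
  funext a
  simp only [Matrix.mulVec, dotProduct, Matrix.sum_apply, Finset.sum_apply, Finset.sum_mul]
  exact Finset.sum_comm

lemma dotProduct_sum' {ι κ : Type*} [Fintype ι] [Fintype κ] (u : ι → ℝ) (f : κ → ι → ℝ) :
    u ⬝ᵥ (∑ j, f j) = ∑ j, u ⬝ᵥ f j := by
  simp only [dotProduct, Finset.sum_apply, Finset.mul_sum]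
  exact Finset.sum_comm

lemma vecMulVec_mulVec' {ι : Type*} [Fintype ι] (u v w : ι → ℝ) :
    (Matrix.vecMulVec u v) *ᵥ w = (v ⬝ᵥ w) • u := by
  funext a
  simp [Matrix.mulVec, Matrix.vecMulVec_apply, dotProduct, Finset.sum_mul, Finset.mul_sum]
  ring_nf

/-- gap-free bound on projection errors. -/
theorem stmt0 (d k : ℕ) (hd : 1 ≤ d) (hk : 1 ≤ k)
    (M : Matrix (Fin d) (Fin d) ℝ) (x : Fin k → (Fin d → ℝ))
    (ε τ : ℝ) (hε : 0 ≤ ε) (hτ : 0 ≤ τ)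
    (hM : opNorm (M - ∑ i, Matrix.vecMulVec (x i) (x i)) ≤ ε)
    (P : Matrix (Fin d) (Fin d) ℝ) (hPsymm : Pᵀ = P) (hPproj : P * P = P)
    (hPM : opNorm ((1 - P) * M) ≤ τ) :
    ∀ i : Fin k, _root_.enorm ((1 - P).mulVec (x i)) ^ 2 ≤ ε + τ := by
  intro i
  set Q : Matrix (Fin d) (Fin d) ℝ := 1 - P with hQ
  set S : Matrix (Fin d) (Fin d) ℝ := ∑ j, Matrix.vecMulVec (x j) (x j) with hS
  have hQsymm : Qᵀ = Q := by
    simp [hQ, Matrix.transpose_sub, hPsymm]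
  have hPQ : P * Q = 0 := by
    simp [hQ, Matrix.mul_sub, hPproj]
  set w : Fin d → ℝ := Q *ᵥ (x i) with hw
  set s : ℝ := _root_.enorm w with hsdef
  have hs0 : 0 ≤ s := enorm_nonneg w
  have hQQ : Q * Q = Q := by
    rw [hQ]
    noncomm_ring [hPproj]
  -- w is Q-invariant: Q *ᵥ w = w
  have hQw : Q *ᵥ w = w := by
    rw [hw, Matrix.mulVec_mulVec, hQQ]
  -- key: w ⬝ᵥ x i = s^2
  have hwx : w ⬝ᵥ x i = s ^ 2 := by
    have hdecomp : x i = w + P *ᵥ (x i) := by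
      rw [hw, hQ, Matrix.sub_mulVec, Matrix.one_mulVec]
      abel
    have hzero : w ⬝ᵥ (P *ᵥ (x i)) = 0 := by
      rw [dotProduct_mulVec, ← Matrix.mulVec_transpose, hPsymm, hw,
        Matrix.mulVec_mulVec]
      have : P * Q = 0 := hPQ
      rw [this]
      simp
    rw [hsdef, enorm_sq]
    conv_lhs => rw [hdecomp]
    rw [dotProduct_add, hzero, add_zero]
  -- quadratic form of S at w
  have hquad : w ⬝ᵥ (S *ᵥ w) = ∑ j, (w ⬝ᵥ x j) ^ 2 := by
    rw [hS, sum_mulVec', dotProduct_sum']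
    apply Finset.sum_congr rfl
    intro j _
    rw [vecMulVec_mulVec', dotProduct_smul]
    rw [dotProduct_comm (x j) w]
    ring_nf
  -- lower bound: s^4 ≤ w ⬝ᵥ S w
  have hlow : s ^ 4 ≤ w ⬝ᵥ (S *ᵥ w) := by
    rw [hquad]
    have : (w ⬝ᵥ x i) ^ 2 ≤ ∑ j, (w ⬝ᵥ x j) ^ 2 :=
      Finset.single_le_sum (f := fun j => (w ⬝ᵥ x j) ^ 2) (fun j _ => sq_nonneg _) (Finset.mem_univ i)
    calc s ^ 4 = (s ^ 2) ^ 2 := by ring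
    _ = (w ⬝ᵥ x i) ^ 2 := by rw [hwx]
    _ ≤ _ := this
  -- generic bound |w ⬝ᵥ A w| ≤ opNorm A * s^2
  have hbound : ∀ A : Matrix (Fin d) (Fin d) ℝ, |w ⬝ᵥ (A *ᵥ w)| ≤ opNorm A * s ^ 2 := by
    intro A
    calc |w ⬝ᵥ (A *ᵥ w)| ≤ _root_.enorm w * _root_.enorm (A *ᵥ w) := abs_dot_le _ _
    _ ≤ _root_.enorm w * (opNorm A * _root_.enorm w) := by
        apply mul_le_mul_of_nonneg_left (mulVec_enorm_le A w) (enorm_nonneg w)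
    _ = opNorm A * s ^ 2 := by rw [← hsdef]; ring
  -- w ⬝ᵥ M w = w ⬝ᵥ (Q M) w
  have hQM : w ⬝ᵥ (M *ᵥ w) = w ⬝ᵥ ((Q * M) *ᵥ w) := by
    rw [← Matrix.mulVec_mulVec]
    rw [dotProduct_mulVec w Q, ← Matrix.mulVec_transpose, hQsymm, hQw]
  have hMbound : w ⬝ᵥ (M *ᵥ w) ≤ τ * s ^ 2 := by
    rw [hQM]
    calc w ⬝ᵥ ((Q * M) *ᵥ w) ≤ |w ⬝ᵥ ((Q * M) *ᵥ w)| := le_abs_self _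
    _ ≤ opNorm (Q * M) * s ^ 2 := hbound _
    _ ≤ τ * s ^ 2 := by
        apply mul_le_mul_of_nonneg_right _ (sq_nonneg s)
        exact hPM
  have hMS : -(ε * s ^ 2) ≤ w ⬝ᵥ ((M - S) *ᵥ w) := by
    have h1 := hbound (M - S)
    have h2 : opNorm (M - S) * s ^ 2 ≤ ε * s ^ 2 :=
      mul_le_mul_of_nonneg_right hM (sq_nonneg s)
    have := (abs_le.mp h1).1
    linarith
  -- combine: s^4 ≤ (ε + τ) * s^2
  have hcomb : s ^ 4 ≤ (ε + τ) * s ^ 2 := by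
    have hsplit : w ⬝ᵥ (S *ᵥ w) = w ⬝ᵥ (M *ᵥ w) - w ⬝ᵥ ((M - S) *ᵥ w) := by
      rw [Matrix.sub_mulVec, dotProduct_sub]
      ring
    have := hlow
    rw [hsplit] at this
    nlinarith [hMbound, hMS]
  -- conclude
  show s ^ 2 ≤ ε + τ
  rcases eq_or_lt_of_le (sq_nonneg s) with h | h
  · rw [← h]; positivity
  · have : s ^ 4 = s ^ 2 * s ^ 2 := by ring
    nlinarith
end

section
/- Let X be a real n×d matrix, θ, θ* ∈ ℝ^d, and ζ ∈ ℝ^n. If ⟨Xθ* + ζ, Xθ⟩ ≤ 0, then ‖Xθ*‖² ≤ ‖X(θ − θ*)‖² + ‖ζ‖². -/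
open Matrix

/-- The Euclidean norm of a vector in `ℝ^d`. -/
noncomputable def enorm₂ {ι : Type*} [Fintype ι] (v : ι → ℝ) : ℝ :=
  Real.sqrt (∑ i, v i ^ 2)

lemma enorm₂_sq {ι : Type*} [Fintype ι] (v : ι → ℝ) :
    enorm₂ v ^ 2 = ∑ i, v i ^ 2 := by
  rw [enorm₂, Real.sq_sqrt (Finset.sum_nonneg fun i _ => sq_nonneg _)]

/-- a misclustered client has large estimation error or large noise. -/
theorem stmt8 (n d : ℕ) (X : Matrix (Fin n) (Fin d) ℝ) (θ θs : Fin d → ℝ)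
    (ζ : Fin n → ℝ) (h : (X.mulVec θs + ζ) ⬝ᵥ X.mulVec θ ≤ 0) :
    enorm₂ (X.mulVec θs) ^ 2 ≤ enorm₂ (X.mulVec (θ - θs)) ^ 2 + enorm₂ ζ ^ 2 := by
  set a := X.mulVec θs
  set b := X.mulVec θ
  have hba : X.mulVec (θ - θs) = b - a := X.mulVec_sub θ θs
  rw [hba, enorm₂_sq, enorm₂_sq, enorm₂_sq]
  have hnn : (0:ℝ) ≤ ∑ i, (b i + ζ i) ^ 2 :=
    Finset.sum_nonneg fun i _ => sq_nonneg _
  have hdot : (a + ζ) ⬝ᵥ b = ∑ i, (a i + ζ i) * b i := rfl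
  rw [hdot] at h
  have key : ∑ i, a i ^ 2 =
      (∑ i, (b - a) i ^ 2 + ∑ i, ζ i ^ 2) - ∑ i, (b i + ζ i) ^ 2
        + 2 * ∑ i, (a i + ζ i) * b i := by
    simp only [Pi.sub_apply]
    rw [← Finset.sum_add_distrib, ← Finset.sum_sub_distrib, Finset.mul_sum,
      ← Finset.sum_add_distrib]
    exact Finset.sum_congr rfl fun i _ => by ring
  linarith
end

section
/- For every K ≥ 1 there exists a constant C = C(K) > 0 with the following property. Let N ≥ d ≥ 1 and let X be a random N×d real matrix whose rows x₁, …, x_N are mutually independent, mean-zero, isotropic (E[x_i x_iᵀ] = I_d), and such that ⟨x_i, u⟩ is K-sub-Gaussian for every unit vector u ∈ ℝ^d. Let ν ∈ (0,1] with νN ≥ d. Then with probability at least 1 − 2e^{−d}, simultaneously for every subset S ⊆ {1, …, N} with |S| ≤ νN, the submatrix X_S formed by the rows indexed by S satisfies ‖X_S‖² ≤ C N ν log(e/ν). -/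
open Matrix MeasureTheory ProbabilityTheory

/-- The Euclidean norm of a vector in `ℝ^ι`. -/
noncomputable def euclNorm {ι : Type*} [Fintype ι] (v : ι → ℝ) : ℝ :=
  Real.sqrt (∑ i, v i ^ 2)

/-- A real random variable `ξ` is `K`-sub-Gaussian under `μ` if it is centered and its
moment generating function satisfies `E[exp(λξ)] ≤ exp(λ²K²/2)` for all `λ`. -/
def IsSubG {Ω : Type*} [MeasurableSpace Ω] (μ : Measure Ω) (K : ℝ) (ξ : Ω → ℝ) : Prop :=
  (∫ ω, ξ ω ∂μ) = 0 ∧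
    ∀ l : ℝ, Integrable (fun ω => Real.exp (l * ξ ω)) μ ∧
      (∫ ω, Real.exp (l * ξ ω) ∂μ) ≤ Real.exp (l ^ 2 * K ^ 2 / 2)

section Aux

open Metric RealInnerProductSpace Real Finset

/-- Volumetric bound: a `1/4`-separated set of unit vectors in `ℝ^ι` has at most `9^(card ι)`
elements. -/
lemma sep_card_le {ι : Type} [Fintype ι] [Nonempty ι] (T : Finset (EuclideanSpace ℝ ι))
    (h1 : ∀ y ∈ T, ‖y‖ = (1:ℝ))
    (hsep : ∀ y ∈ T, ∀ z ∈ T, y ≠ z → 1/4 < dist y z) :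
    (T.card : ℝ) ≤ 9 ^ (Fintype.card ι) := by
  classical
  set n := Fintype.card ι with hn
  set B := volume (ball (0 : EuclideanSpace ℝ ι) 1) with hB
  have hB0 : B ≠ 0 := (measure_ball_pos _ _ one_pos).ne'
  have hBt : B ≠ ⊤ := measure_ball_lt_top.ne
  have hdisj : (T : Set (EuclideanSpace ℝ ι)).PairwiseDisjoint
      (fun y => ball y (1/8 : ℝ)) := by
    intro y hy z hz hyz
    rw [Function.onFun, Set.disjoint_left]
    intro w hwy hwz
    have hd1 : dist y z ≤ dist y w + dist w z := dist_triangle _ _ _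
    have hd2 : dist y w < 1/8 := by rwa [dist_comm, ← mem_ball]
    have hd3 : dist w z < 1/8 := mem_ball.mp hwz
    have := hsep y hy z hz hyz
    linarith
  have hunion : (⋃ y ∈ T, ball y (1/8 : ℝ)) ⊆ ball (0 : EuclideanSpace ℝ ι) (9/8) := by
    intro w hw
    obtain ⟨y, hy, hwy⟩ := Set.mem_iUnion₂.mp hw
    have : dist w 0 ≤ dist w y + dist y 0 := dist_triangle _ _ _
    have h2 : dist w y < 1/8 := mem_ball.mp hwy
    have h3 : dist y 0 = 1 := by rw [dist_zero_right, h1 y hy]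
    rw [mem_ball]
    linarith
  have hvol : ∀ (y : EuclideanSpace ℝ ι) (r : ℝ), 0 ≤ r →
      volume (ball y r) = ENNReal.ofReal (r ^ n) * B :=
    fun y r hr => Measure.addHaar_ball _ y hr |>.trans (by rw [finrank_euclideanSpace])
  have key : (T.card : ENNReal) * (ENNReal.ofReal ((1/8 : ℝ) ^ n) * B)
      ≤ ENNReal.ofReal ((9/8 : ℝ) ^ n) * B := by
    calc (T.card : ENNReal) * (ENNReal.ofReal ((1/8 : ℝ) ^ n) * B)
        = ∑ y ∈ T, volume (ball y (1/8 : ℝ)) := by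
          rw [Finset.sum_congr rfl fun y _ => hvol y (1/8) (by norm_num),
            Finset.sum_const, nsmul_eq_mul]
      _ = volume (⋃ y ∈ T, ball y (1/8 : ℝ)) :=
          (measure_biUnion_finset hdisj fun y _ => measurableSet_ball).symm
      _ ≤ volume (ball (0 : EuclideanSpace ℝ ι) (9/8)) := measure_mono hunion
      _ = ENNReal.ofReal ((9/8 : ℝ) ^ n) * B := hvol 0 (9/8) (by norm_num)
  rw [← mul_assoc] at key
  have key2 : (T.card : ENNReal) * ENNReal.ofReal ((1/8 : ℝ) ^ n)
      ≤ ENNReal.ofReal ((9/8 : ℝ) ^ n) :=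
    (ENNReal.mul_le_mul_iff_left hB0 hBt).mp key
  have key3 : (T.card : ℝ) * (1/8 : ℝ) ^ n ≤ (9/8 : ℝ) ^ n := by
    have := ENNReal.toReal_mono (by simp) key2
    rwa [ENNReal.toReal_mul, ENNReal.toReal_natCast, ENNReal.toReal_ofReal (by positivity),
      ENNReal.toReal_ofReal (by positivity)] at this
  have h8 : (0:ℝ) < (8:ℝ) ^ n := by positivity
  have := mul_le_mul_of_nonneg_right key3 h8.le
  calc (T.card : ℝ) = (T.card : ℝ) * (1/8:ℝ)^n * 8^n := by
        rw [mul_assoc, ← mul_pow]; norm_num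
    _ ≤ (9/8:ℝ)^n * 8^n := this
    _ = 9^n := by rw [← mul_pow]; norm_num

/-- Existence of a `1/4`-net of the unit sphere of `ℝ^ι` of cardinality at most `9^(card ι)`. -/
lemma exists_net (ι : Type) [Fintype ι] :
    ∃ T : Finset (EuclideanSpace ℝ ι), (∀ y ∈ T, ‖y‖ = (1:ℝ)) ∧
      (T.card : ℝ) ≤ 9 ^ (Fintype.card ι) ∧
      ∀ z : EuclideanSpace ℝ ι, ‖z‖ = 1 → ∃ y ∈ T, ‖z - y‖ ≤ 1/4 := by
  classical
  rcases isEmpty_or_nonempty ι with hE | hNE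
  · refine ⟨∅, by simp, by simpa using pow_nonneg (by norm_num : (0:ℝ) ≤ 9) (Fintype.card ι),
      fun z hz => absurd hz ?_⟩
    have : ‖z‖ = 0 := by
      rw [EuclideanSpace.norm_eq]
      simp
    rw [this]; norm_num
  · set n := Fintype.card ι with hn
    set Q : ℕ → Prop := fun k => ∃ T : Finset (EuclideanSpace ℝ ι),
      (∀ y ∈ T, ‖y‖ = (1:ℝ)) ∧ (∀ y ∈ T, ∀ z ∈ T, y ≠ z → 1/4 < dist y z) ∧ T.card = k
      with hQ
    have hbound : ∀ k, Q k → k ≤ 9 ^ n := by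
      rintro k ⟨T, hT1, hTsep, hTcard⟩
      have h := sep_card_le T hT1 hTsep
      rw [hTcard] at h
      have h2 : (k:ℝ) ≤ ((9 ^ n : ℕ) : ℝ) := by push_cast; exact h
      exact_mod_cast h2
    have hQ0 : Q 0 := ⟨∅, by simp, by simp, rfl⟩
    set k₀ := Nat.findGreatest Q (9 ^ n) with hk₀
    have hQk₀ : Q k₀ := Nat.findGreatest_spec (Nat.zero_le _) hQ0
    obtain ⟨T, hT1, hTsep, hTcard⟩ := hQk₀
    have hcard : (T.card : ℝ) ≤ 9 ^ n := by
      have h2 : T.card ≤ 9 ^ n := hTcard ▸ hbound k₀ ⟨T, hT1, hTsep, hTcard⟩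
      have h3 : (T.card : ℝ) ≤ ((9 ^ n : ℕ) : ℝ) := Nat.cast_le.mpr h2
      push_cast at h3; exact h3
    refine ⟨T, hT1, hcard, ?_⟩
    intro z hz
    by_contra hcon
    push_neg at hcon
    have hzT : z ∉ T := fun hmem => by
      have := hcon z hmem; simp at this; linarith
    have hQsucc : Q (k₀ + 1) := by
      refine ⟨insert z T, ?_, ?_, by rw [Finset.card_insert_of_notMem hzT, hTcard]⟩
      · intro y hy
        rcases Finset.mem_insert.mp hy with h | h
        · rw [h]; exact hz
        · exact hT1 y h
      · intro y hy w hw hyw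
        rcases Finset.mem_insert.mp hy with h | h <;>
          rcases Finset.mem_insert.mp hw with h' | h'
        · exact absurd (h.trans h'.symm) hyw
        · rw [h, dist_eq_norm]; exact hcon w h'
        · rw [h', dist_comm, dist_eq_norm]; exact hcon y h
        · exact hTsep y h w h' hyw
    exact Nat.findGreatest_is_greatest (Nat.lt_succ_self k₀) (hbound _ hQsucc) hQsucc

/-- If the bilinear form of a matrix is bounded by `t` on a pair of `1/4`-nets of the unit
spheres, then its operator norm is at most `2 t`. -/
lemma opNorm_le_two_mul {ι κ : Type} [Fintype ι] [Fintype κ] [DecidableEq κ]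
    (A : Matrix ι κ ℝ) {t : ℝ} (ht : 0 ≤ t)
    (Nu : Finset (EuclideanSpace ℝ κ)) (Mv : Finset (EuclideanSpace ℝ ι))
    (hMv1 : ∀ y ∈ Mv, ‖y‖ = (1:ℝ))
    (hNu : ∀ z : EuclideanSpace ℝ κ, ‖z‖ = 1 → ∃ y ∈ Nu, ‖z - y‖ ≤ 1/4)
    (hMv : ∀ z : EuclideanSpace ℝ ι, ‖z‖ = 1 → ∃ y ∈ Mv, ‖z - y‖ ≤ 1/4)
    (h : ∀ u ∈ Nu, ∀ v ∈ Mv, ⟪v, Matrix.toEuclideanLin A u⟫ ≤ t) :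
    opNorm A ≤ 2 * t := by
  set L := LinearMap.toContinuousLinearMap (Matrix.toEuclideanLin A) with hL
  set r := ‖L‖ with hr
  have hr0 : 0 ≤ r := norm_nonneg _
  have key : ∀ u : EuclideanSpace ℝ κ, ‖u‖ = 1 → ‖L u‖ ≤ t + r / 2 := by
    intro u hu
    rcases eq_or_ne (L u) 0 with h0 | h0
    · rw [h0, norm_zero]; linarith
    · set v : EuclideanSpace ℝ ι := (‖L u‖⁻¹ : ℝ) • L u with hv
      have hv1 : ‖v‖ = 1 := norm_smul_inv_norm h0
      obtain ⟨u₀, hu₀N, hu₀⟩ := hNu u hu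
      obtain ⟨v₀, hv₀N, hv₀⟩ := hMv v hv1
      have hv₀1 : ‖v₀‖ = 1 := hMv1 v₀ hv₀N
      have hLnorm : ‖L u‖ = ⟪v, L u⟫ := by
        rw [hv, real_inner_smul_left, real_inner_self_eq_norm_mul_norm]
        field_simp
      have hdec : ⟪v, L u⟫ = ⟪v₀, Matrix.toEuclideanLin A u₀⟫
          + ⟪v - v₀, L u⟫ + ⟪v₀, L u - L u₀⟫ := by
        have hLu₀ : (L u₀ : EuclideanSpace ℝ ι) = Matrix.toEuclideanLin A u₀ := rfl
        rw [← hLu₀, inner_sub_left, inner_sub_right]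
        ring
      have b1 : ⟪v₀, Matrix.toEuclideanLin A u₀⟫ ≤ t := h u₀ hu₀N v₀ hv₀N
      have b2 : ⟪v - v₀, L u⟫ ≤ 1/4 * r := by
        refine (real_inner_le_norm _ _).trans ?_
        have h1 : ‖L u‖ ≤ r := by
          have := L.le_opNorm u
          rwa [hu, mul_one] at this
        exact mul_le_mul hv₀ h1 (norm_nonneg _) (by norm_num)
      have b3 : ⟪v₀, L u - L u₀⟫ ≤ r * (1/4) := by
        refine (real_inner_le_norm _ _).trans ?_
        rw [hv₀1, one_mul, ← map_sub]
        exact (L.le_opNorm _).trans (mul_le_mul_of_nonneg_left hu₀ hr0)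
      rw [hLnorm, hdec]
      linarith
  have hb : r ≤ t + r / 2 := by
    rw [hr]
    exact ContinuousLinearMap.opNorm_le_of_unit_norm (by linarith) key
  have : opNorm A = r := rfl
  linarith

lemma measurable_dot {Ω : Type*} [MeasurableSpace Ω] {d : ℕ} {f : Ω → Fin d → ℝ}
    (hf : Measurable f) (u : Fin d → ℝ) : Measurable fun ω => f ω ⬝ᵥ u := by
  apply Finset.measurable_sum
  intro j _
  exact ((measurable_pi_apply j).comp hf).mul_const (u j)

/-- Chernoff bound for a unit-weight linear combination of independent `K`-sub-Gaussian
marginals. -/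
lemma chernoff_sum {Ω : Type*} [MeasurableSpace Ω] (μ : Measure Ω) [IsProbabilityMeasure μ]
    {N d : ℕ} (x : Fin N → Ω → Fin d → ℝ) (hxmeas : ∀ i, Measurable (x i))
    (hindep : iIndepFun x μ) {K : ℝ} (hK : 1 ≤ K)
    (u : Fin d → ℝ)
    (hsub : ∀ i, IsSubG μ K fun ω => x i ω ⬝ᵥ u)
    (S : Finset (Fin N)) (w : Fin N → ℝ) (hw : ∑ i ∈ S, w i ^ 2 = 1)
    {ε : ℝ} (hε : 0 ≤ ε) :
    μ {ω | ε ≤ ∑ i ∈ S, w i * (x i ω ⬝ᵥ u)} ≤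
      ENNReal.ofReal (Real.exp (-(ε ^ 2) / (2 * K ^ 2))) := by
  classical
  have hK0 : (0:ℝ) < K := lt_of_lt_of_le one_pos hK
  set g : Fin N → (Fin d → ℝ) → ℝ := fun i p => w i * (p ⬝ᵥ u) with hg
  set Y : Fin N → Ω → ℝ := fun i => g i ∘ x i with hY
  have hgmeas : ∀ i, Measurable (g i) := by
    intro i
    exact (measurable_dot measurable_id u).const_mul (w i)
  have hYmeas : ∀ i, Measurable (Y i) := fun i => (hgmeas i).comp (hxmeas i)
  have hYindep : iIndepFun Y μ := hindep.comp g hgmeas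
  set t : ℝ := ε / K ^ 2 with htdef
  have ht : 0 ≤ t := div_nonneg hε (by positivity)
  have hint : ∀ i ∈ S, Integrable (fun ω => exp (t * Y i ω)) μ := by
    intro i _
    have h := ((hsub i).2 (t * w i)).1
    simpa only [hY, hg, Function.comp_apply, mul_assoc] using h
  have hintsum : Integrable (fun ω => exp (t * (∑ i ∈ S, Y i) ω)) μ :=
    hYindep.integrable_exp_mul_sum hYmeas hint
  have hset : {ω | ε ≤ ∑ i ∈ S, w i * (x i ω ⬝ᵥ u)} =
      {ω | ε ≤ (∑ i ∈ S, Y i) ω} := by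
    ext ω
    simp only [Set.mem_setOf_eq, Finset.sum_apply, hY, hg, Function.comp_apply]
  have hchern := measure_ge_le_exp_mul_mgf (X := ∑ i ∈ S, Y i) (μ := μ) ε ht hintsum
  have hmgf : mgf (∑ i ∈ S, Y i) μ t ≤ exp (t ^ 2 * K ^ 2 / 2) := by
    rw [hYindep.mgf_sum hYmeas S]
    have hterm : ∀ i ∈ S, mgf (Y i) μ t ≤ exp ((t * w i) ^ 2 * K ^ 2 / 2) := by
      intro i _
      have h := ((hsub i).2 (t * w i)).2
      rw [mgf]
      simpa only [hY, hg, Function.comp_apply, mul_assoc] using h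
    calc ∏ i ∈ S, mgf (Y i) μ t ≤ ∏ i ∈ S, exp ((t * w i) ^ 2 * K ^ 2 / 2) :=
          Finset.prod_le_prod (fun i _ => mgf_nonneg) hterm
      _ = exp (∑ i ∈ S, (t * w i) ^ 2 * K ^ 2 / 2) := (Real.exp_sum _ _).symm
      _ = exp (t ^ 2 * K ^ 2 / 2) := by
          congr 1
          rw [show (t:ℝ) ^ 2 * K ^ 2 / 2 = t ^ 2 * K ^ 2 / 2 * ∑ i ∈ S, w i ^ 2 by
            rw [hw]; ring, Finset.mul_sum]
          exact Finset.sum_congr rfl fun i _ => by ring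
  have hfinal : (μ {ω | ε ≤ (∑ i ∈ S, Y i) ω}).toReal ≤ exp (-(ε ^ 2) / (2 * K ^ 2)) := by
    refine hchern.trans ?_
    calc exp (-t * ε) * mgf (∑ i ∈ S, Y i) μ t
        ≤ exp (-t * ε) * exp (t ^ 2 * K ^ 2 / 2) :=
          mul_le_mul_of_nonneg_left hmgf (exp_pos _).le
      _ = exp (-t * ε + t ^ 2 * K ^ 2 / 2) := (Real.exp_add _ _).symm
      _ = exp (-(ε ^ 2) / (2 * K ^ 2)) := by
          congr 1
          rw [htdef]
          field_simp
          ring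
  rw [hset, ← ENNReal.ofReal_toReal (measure_ne_top μ _)]
  exact ENNReal.ofReal_le_ofReal hfinal

/-- Counting bound for the number of subsets of `Fin N` of size at most `ν N`. -/
lemma card_small_subsets {N : ℕ} {ν : ℝ} (hν0 : 0 < ν) (hν1 : ν ≤ 1) :
    ((Finset.univ.powerset.filter
        (fun S : Finset (Fin N) => (S.card : ℝ) ≤ ν * N)).card : ℝ)
      ≤ Real.exp (ν * N * (1 - Real.log ν)) := by
  classical
  set k := ⌊ν * N⌋₊ with hk
  have hνN0 : 0 ≤ ν * N := by positivity
  have hkνN : (k : ℝ) ≤ ν * N := Nat.floor_le hνN0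
  have hkN : k ≤ N := by
    have h1 : ν * N ≤ N := by nlinarith [Nat.cast_nonneg (α := ℝ) N]
    calc k = ⌊ν * N⌋₊ := rfl
      _ ≤ ⌊(N:ℝ)⌋₊ := Nat.floor_le_floor h1
      _ = N := Nat.floor_natCast N
  have hsub : Finset.univ.powerset.filter (fun S : Finset (Fin N) => (S.card : ℝ) ≤ ν * N)
      ⊆ (Finset.range (k+1)).biUnion (fun m => Finset.powersetCard m Finset.univ) := by
    intro S hS
    rw [Finset.mem_filter] at hS
    refine Finset.mem_biUnion.mpr ⟨S.card, ?_, ?_⟩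
    · exact Finset.mem_range.mpr (Nat.lt_succ_of_le (Nat.le_floor hS.2))
    · exact Finset.mem_powersetCard.mpr ⟨Finset.subset_univ S, rfl⟩
  have hcard1 : (Finset.univ.powerset.filter
      (fun S : Finset (Fin N) => (S.card : ℝ) ≤ ν * N)).card
      ≤ ∑ m ∈ Finset.range (k+1), N.choose m := by
    refine (Finset.card_le_card hsub).trans ?_
    refine (Finset.card_biUnion_le).trans ?_
    refine Finset.sum_le_sum fun m _ => ?_
    rw [Finset.card_powersetCard, Finset.card_univ, Fintype.card_fin]
  have step2 : (∑ m ∈ Finset.range (k+1), (N.choose m : ℝ))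
      ≤ (∑ m ∈ Finset.range (k+1), (N.choose m : ℝ) * ν ^ m) / ν ^ k := by
    rw [Finset.sum_div]
    refine Finset.sum_le_sum fun m hm => ?_
    have hm' : m ≤ k := Nat.lt_succ_iff.mp (Finset.mem_range.mp hm)
    have hpow : ν ^ k ≤ ν ^ m := pow_le_pow_of_le_one hν0.le hν1 hm'
    rw [mul_div_assoc]
    have h1 : (1:ℝ) ≤ ν ^ m / ν ^ k := (one_le_div (by positivity)).mpr hpow
    nlinarith [Nat.cast_nonneg (α := ℝ) (N.choose m)]
  have step3 : (∑ m ∈ Finset.range (k+1), (N.choose m : ℝ) * ν ^ m) ≤ (1 + ν) ^ N := by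
    have hext : (∑ m ∈ Finset.range (k+1), (N.choose m : ℝ) * ν ^ m)
        ≤ ∑ m ∈ Finset.range (N+1), (N.choose m : ℝ) * ν ^ m := by
      refine Finset.sum_le_sum_of_subset_of_nonneg ?_ fun m _ _ => by positivity
      exact Finset.range_subset_range.mpr (Nat.succ_le_succ hkN)
    refine hext.trans_eq ?_
    rw [add_comm 1 ν, add_pow]
    refine Finset.sum_congr rfl fun m _ => ?_
    rw [one_pow]
    ring
  have step4 : ((1:ℝ) + ν) ^ N ≤ exp (ν * N) := by
    calc ((1:ℝ) + ν) ^ N ≤ exp ν ^ N := by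
          refine pow_le_pow_left₀ (by linarith) ?_ N
          linarith [Real.add_one_le_exp ν]
      _ = exp (ν * N) := by rw [← Real.exp_nat_mul]; ring_nf
  have step5 : (1:ℝ) / ν ^ k ≤ exp (ν * N * (- Real.log ν)) := by
    have hν : ν ^ k = exp (k * Real.log ν) := by
      rw [← Real.log_pow, Real.exp_log (by positivity)]
    rw [hν, one_div, ← Real.exp_neg, Real.exp_le_exp]
    have hlog : 0 ≤ -Real.log ν := neg_nonneg.mpr (Real.log_nonpos hν0.le hν1)
    calc -(↑k * Real.log ν) = ↑k * (-Real.log ν) := by ring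
      _ ≤ ν * N * (-Real.log ν) := mul_le_mul_of_nonneg_right hkνN hlog
      _ = ν * ↑N * (-Real.log ν) := rfl
  have hpos : (0:ℝ) < ν ^ k := by positivity
  calc ((Finset.univ.powerset.filter
        (fun S : Finset (Fin N) => (S.card : ℝ) ≤ ν * N)).card : ℝ)
      ≤ ∑ m ∈ Finset.range (k+1), (N.choose m : ℝ) := by
        exact_mod_cast hcard1
    _ ≤ (∑ m ∈ Finset.range (k+1), (N.choose m : ℝ) * ν ^ m) / ν ^ k := step2
    _ ≤ (1 + ν) ^ N / ν ^ k := by gcongr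
    _ ≤ exp (ν * N) / ν ^ k := by gcongr
    _ = exp (ν * N) * (1 / ν ^ k) := by ring
    _ ≤ exp (ν * N) * exp (ν * N * (-Real.log ν)) := by
        refine mul_le_mul_of_nonneg_left step5 (exp_pos _).le
    _ = exp (ν * N * (1 - Real.log ν)) := by rw [← Real.exp_add]; ring_nf

end Aux

set_option maxHeartbeats 1000000 in
/-- uniform operator-norm bound over all small row-subsets of a random
matrix with independent isotropic sub-Gaussian rows. -/
theorem stmt18 :
    ∀ K : ℝ, 1 ≤ K →
    ∃ C : ℝ, 0 < C ∧
      ∀ (N d : ℕ), 1 ≤ d → d ≤ N →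
      ∀ (Ω : Type) (_ : MeasurableSpace Ω) (μ : Measure Ω), IsProbabilityMeasure μ →
      ∀ (x : Fin N → Ω → (Fin d → ℝ)),
        (∀ i, Measurable (x i)) →
        iIndepFun x μ →
        (∀ i j, (∫ ω, x i ω j ∂μ) = 0) →
        (∀ (i : Fin N) (p q : Fin d),
          (∫ ω, x i ω p * x i ω q ∂μ) = if p = q then 1 else 0) →
        (∀ (i : Fin N) (u : Fin d → ℝ), euclNorm u = 1 → IsSubG μ K (fun ω => x i ω ⬝ᵥ u)) →
        ∀ ν : ℝ, ν ∈ Set.Ioc (0 : ℝ) 1 → (d : ℝ) ≤ ν * N →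
          1 - 2 * Real.exp (-(d : ℝ)) ≤
            (μ {ω | ∀ S : Finset (Fin N), (S.card : ℝ) ≤ ν * N →
                opNorm (Matrix.of fun (s : {i // i ∈ S}) (j : Fin d) => x s.val ω j) ^ 2 ≤
                  C * N * ν * Real.log (Real.exp 1 / ν)}).toReal := by
  intro K hK
  have hK0 : (0:ℝ) < K := lt_of_lt_of_le one_pos hK
  refine ⟨72 * K ^ 2, by positivity, ?_⟩
  intro N d hd1 hdN Ω mΩ μ hProb x hxmeas hindep hmean hiso hsubG ν hν hdν
  haveI := hProb
  obtain ⟨hν0, hν1⟩ := hν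
  classical
  set L : ℝ := Real.log (Real.exp 1 / ν) with hLdef
  have hLeq : L = 1 - Real.log ν := by
    rw [hLdef, Real.log_div (Real.exp_ne_zero 1) hν0.ne', Real.log_exp]
  have hL1 : 1 ≤ L := by
    have := Real.log_nonpos hν0.le hν1
    rw [hLeq]; linarith
  have hd1' : (1:ℝ) ≤ (d:ℝ) := by exact_mod_cast hd1
  have hνN0 : 0 ≤ ν * N := by
    have : (0:ℝ) ≤ (N:ℝ) := Nat.cast_nonneg N
    positivity
  set P : ℝ := ν * N * L with hPdef
  have hP0 : 0 ≤ P := by nlinarith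
  have hdP : (d:ℝ) ≤ P := hdν.trans (le_mul_of_one_le_right hνN0 hL1)
  set B : ℝ := 8 * P + d with hBdef
  have hB0 : 0 ≤ B := by nlinarith
  set ε : ℝ := K * Real.sqrt (2 * B) with hεdef
  have hε0 : 0 ≤ ε := by positivity
  have hε2 : ε ^ 2 = 2 * K ^ 2 * B := by
    rw [hεdef, mul_pow, Real.sq_sqrt (by linarith)]
    ring
  -- nets
  obtain ⟨Nu, hNu1, hNucard, hNucov⟩ := exists_net (Fin d)
  choose Mv hMv1 hMvcard hMvcov using fun S : Finset (Fin N) => exists_net {i // i ∈ S}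
  -- family of bad events
  set 𝒮 : Finset (Finset (Fin N)) :=
    Finset.univ.powerset.filter (fun S => (S.card : ℝ) ≤ ν * N) with h𝒮
  set Z : (S : Finset (Fin N)) → EuclideanSpace ℝ (Fin d) →
      EuclideanSpace ℝ {i // i ∈ S} → Ω → ℝ :=
    fun S u v ω => ∑ s : {i // i ∈ S}, v s * (x s.val ω ⬝ᵥ (fun j => u j)) with hZdef
  set E : (S : Finset (Fin N)) → EuclideanSpace ℝ (Fin d) →
      EuclideanSpace ℝ {i // i ∈ S} → Set Ω :=
    fun S u v => {ω | ε ≤ Z S u v ω} with hEdef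
  set Bad : Set Ω := ⋃ S ∈ 𝒮, ⋃ u ∈ Nu, ⋃ v ∈ Mv S, E S u v with hBaddef
  -- each bad event is unlikely
  have hE : ∀ S : Finset (Fin N), ∀ u ∈ Nu, ∀ v ∈ Mv S,
      μ (E S u v) ≤ ENNReal.ofReal (Real.exp (-B)) := by
    intro S u hu v hv
    set u' : Fin d → ℝ := fun j => u j with hu'def
    have hu'1 : euclNorm u' = 1 := by
      have h := hNu1 u hu
      rw [EuclideanSpace.norm_eq] at h
      rw [euclNorm]
      simpa [Real.norm_eq_abs, sq_abs] using h
    set w : Fin N → ℝ := fun i => if h : i ∈ S then v ⟨i, h⟩ else 0 with hwdef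
    have hws : ∀ s : {i // i ∈ S}, w s.val = v s := fun s => by
      simp only [hwdef, dif_pos s.2, Subtype.coe_eta]
    have hv2 : ∑ s : {i // i ∈ S}, v s ^ 2 = 1 := by
      have h := hMv1 S v hv
      rw [EuclideanSpace.norm_eq] at h
      have := Real.sqrt_eq_one.mp h
      simpa [Real.norm_eq_abs, sq_abs] using this
    have hw : ∑ i ∈ S, w i ^ 2 = 1 := by
      calc ∑ i ∈ S, w i ^ 2 = ∑ s : {i // i ∈ S}, w s.val ^ 2 :=
            (Finset.sum_coe_sort S (fun i => w i ^ 2)).symm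
        _ = ∑ s : {i // i ∈ S}, v s ^ 2 :=
            Finset.sum_congr rfl fun s _ => by rw [hws s]
        _ = 1 := hv2
    have hseteq : E S u v = {ω | ε ≤ ∑ i ∈ S, w i * (x i ω ⬝ᵥ u')} := by
      ext ω
      have hsum : ∑ i ∈ S, w i * (x i ω ⬝ᵥ u') = Z S u v ω := by
        calc ∑ i ∈ S, w i * (x i ω ⬝ᵥ u')
            = ∑ s : {i // i ∈ S}, w s.val * (x s.val ω ⬝ᵥ u') :=
              (Finset.sum_coe_sort S (fun i => w i * (x i ω ⬝ᵥ u'))).symm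
          _ = ∑ s : {i // i ∈ S}, v s * (x s.val ω ⬝ᵥ u') :=
              Finset.sum_congr rfl fun s _ => by rw [hws s]
          _ = Z S u v ω := rfl
      simp only [hEdef, Set.mem_setOf_eq, hsum]
    rw [hseteq]
    have hch := chernoff_sum μ x hxmeas hindep hK u'
      (fun i => hsubG i u' hu'1) S w hw hε0
    refine hch.trans (ENNReal.ofReal_le_ofReal ?_)
    rw [Real.exp_le_exp]
    rw [hε2]
    have hKK : (0:ℝ) < K ^ 2 := by positivity
    rw [div_le_iff₀ (by positivity)]
    ring_nf
    nlinarith [hB0, hKK]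
  -- measurability
  have hZmeas : ∀ (S : Finset (Fin N)) (u : EuclideanSpace ℝ (Fin d))
      (v : EuclideanSpace ℝ {i // i ∈ S}), Measurable (Z S u v) := by
    intro S u v
    apply Finset.measurable_sum
    intro s _
    exact (measurable_dot (hxmeas s.val) (fun j => u j)).const_mul (v s)
  have hEmeas : ∀ (S : Finset (Fin N)) (u : EuclideanSpace ℝ (Fin d))
      (v : EuclideanSpace ℝ {i // i ∈ S}), MeasurableSet (E S u v) :=
    fun S u v => measurableSet_le measurable_const (hZmeas S u v)
  have hBadMeas : MeasurableSet Bad := by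
    refine Finset.measurableSet_biUnion _ fun S _ => ?_
    refine Finset.measurableSet_biUnion _ fun u _ => ?_
    exact Finset.measurableSet_biUnion _ fun v _ => hEmeas S u v
  -- cardinality bounds in the exponential scale
  have hlog9 : Real.log 9 ≤ 3 := by
    have hexp : (9:ℝ) ≤ Real.exp 3 := by
      have h1 := Real.exp_one_gt_d9
      have h3 : Real.exp 3 = (Real.exp 1) ^ 3 := by
        rw [← Real.exp_nat_mul]; norm_num
      have h4 : (2.7182818283:ℝ) ^ 3 ≤ (Real.exp 1) ^ 3 :=
        pow_le_pow_left₀ (by norm_num) h1.le 3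
      have h5 : (9:ℝ) ≤ (2.7182818283:ℝ) ^ 3 := by norm_num
      rw [h3]; linarith
    calc Real.log 9 ≤ Real.log (Real.exp 3) :=
          Real.log_le_log (by norm_num) hexp
      _ = 3 := Real.log_exp 3
  have hpow9 : ∀ m : ℕ, (m : ℝ) ≤ P → ((9:ℝ) ^ m) ≤ Real.exp (3 * P) := by
    intro m hm
    have h9 : (9:ℝ) ^ m = Real.exp (m * Real.log 9) := by
      rw [← Real.log_pow, Real.exp_log (by positivity)]
    rw [h9, Real.exp_le_exp]
    nlinarith [Nat.cast_nonneg (α := ℝ) m, Real.log_pos (by norm_num : (1:ℝ) < 9)]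
  have hNuR : (Nu.card : ℝ) ≤ Real.exp (3 * P) := by
    refine hNucard.trans ?_
    rw [Fintype.card_fin]
    exact hpow9 d hdP
  have hMvR : ∀ S ∈ 𝒮, ((Mv S).card : ℝ) ≤ Real.exp (3 * P) := by
    intro S hS
    refine (hMvcard S).trans ?_
    rw [Fintype.card_coe]
    refine hpow9 S.card ?_
    have hScard : (S.card : ℝ) ≤ ν * N := (Finset.mem_filter.mp hS).2
    exact hScard.trans (le_mul_of_one_le_right hνN0 hL1)
  have h𝒮R : ((𝒮.card : ℝ)) ≤ Real.exp P := by
    have := card_small_subsets (N := N) hν0 hν1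
    rw [h𝒮, hPdef, hLeq]
    exact this
  -- union bound
  have hμBad : μ Bad ≤ ENNReal.ofReal (Real.exp (-(d:ℝ))) := by
    have hcast : ∀ (n : ℕ) (r : ℝ), (n : ℝ) ≤ r → (n : ENNReal) ≤ ENNReal.ofReal r := by
      intro n r h
      rw [← ENNReal.ofReal_natCast n]
      exact ENNReal.ofReal_le_ofReal h
    calc μ Bad ≤ ∑ S ∈ 𝒮, μ (⋃ u ∈ Nu, ⋃ v ∈ Mv S, E S u v) :=
          measure_biUnion_finset_le _ _
      _ ≤ ∑ S ∈ 𝒮, ∑ u ∈ Nu, μ (⋃ v ∈ Mv S, E S u v) :=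
          Finset.sum_le_sum fun S _ => measure_biUnion_finset_le _ _
      _ ≤ ∑ S ∈ 𝒮, ∑ u ∈ Nu, ∑ v ∈ Mv S, μ (E S u v) :=
          Finset.sum_le_sum fun S _ => Finset.sum_le_sum fun u _ =>
            measure_biUnion_finset_le _ _
      _ ≤ ∑ S ∈ 𝒮, ∑ u ∈ Nu, ∑ v ∈ Mv S, ENNReal.ofReal (Real.exp (-B)) :=
          Finset.sum_le_sum fun S _ => Finset.sum_le_sum fun u hu =>
            Finset.sum_le_sum fun v hv => hE S u hu v hv
      _ = ∑ S ∈ 𝒮, ((Nu.card : ENNReal) *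
            (((Mv S).card : ENNReal) * ENNReal.ofReal (Real.exp (-B)))) := by
          refine Finset.sum_congr rfl fun S _ => ?_
          rw [Finset.sum_congr rfl fun u _ => Finset.sum_const _]
          rw [Finset.sum_const]
          simp [nsmul_eq_mul, mul_assoc]
      _ ≤ ∑ S ∈ 𝒮, (ENNReal.ofReal (Real.exp (3 * P)) *
            (ENNReal.ofReal (Real.exp (3 * P)) * ENNReal.ofReal (Real.exp (-B)))) := by
          refine Finset.sum_le_sum fun S hS => ?_
          exact mul_le_mul' (hcast _ _ hNuR)
            (mul_le_mul' (hcast _ _ (hMvR S hS)) le_rfl)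
      _ = (𝒮.card : ENNReal) * (ENNReal.ofReal (Real.exp (3 * P)) *
            (ENNReal.ofReal (Real.exp (3 * P)) * ENNReal.ofReal (Real.exp (-B)))) := by
          rw [Finset.sum_const, nsmul_eq_mul]
      _ ≤ ENNReal.ofReal (Real.exp P) * (ENNReal.ofReal (Real.exp (3 * P)) *
            (ENNReal.ofReal (Real.exp (3 * P)) * ENNReal.ofReal (Real.exp (-B)))) :=
          mul_le_mul' (hcast _ _ h𝒮R) le_rfl
      _ = ENNReal.ofReal (Real.exp P * (Real.exp (3 * P) *
            (Real.exp (3 * P) * Real.exp (-B)))) := by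
          rw [ENNReal.ofReal_mul (Real.exp_pos _).le, ENNReal.ofReal_mul (Real.exp_pos _).le,
            ENNReal.ofReal_mul (Real.exp_pos _).le]
      _ ≤ ENNReal.ofReal (Real.exp (-(d:ℝ))) := by
          refine ENNReal.ofReal_le_ofReal ?_
          rw [← Real.exp_add, ← Real.exp_add, ← Real.exp_add, Real.exp_le_exp, hBdef]
          linarith
  -- the good event implies the uniform bound
  have hGood : Badᶜ ⊆ {ω | ∀ S : Finset (Fin N), (S.card : ℝ) ≤ ν * N →
      opNorm (Matrix.of fun (s : {i // i ∈ S}) (j : Fin d) => x s.val ω j) ^ 2 ≤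
        72 * K ^ 2 * N * ν * L} := by
    intro ω hω S hScard
    have hS𝒮 : S ∈ 𝒮 := Finset.mem_filter.mpr
      ⟨Finset.mem_powerset.mpr (Finset.subset_univ S), hScard⟩
    set A : Matrix {i // i ∈ S} (Fin d) ℝ :=
      Matrix.of fun (s : {i // i ∈ S}) (j : Fin d) => x s.val ω j with hAdef
    have hinner : ∀ u ∈ Nu, ∀ v ∈ Mv S,
        (inner ℝ v (Matrix.toEuclideanLin A u) : ℝ) ≤ ε := by
      intro u hu v hv
      have hne : ω ∉ E S u v := fun hEm => hω (Set.mem_iUnion₂.mpr ⟨S, hS𝒮,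
        Set.mem_iUnion₂.mpr ⟨u, hu, Set.mem_iUnion₂.mpr ⟨v, hv, hEm⟩⟩⟩)
      have hlt : Z S u v ω < ε := by
        by_contra hcon
        exact hne (le_of_not_gt hcon)
      have heq : (inner ℝ v (Matrix.toEuclideanLin A u) : ℝ) = Z S u v ω := by
        rw [PiLp.inner_apply]
        refine Finset.sum_congr rfl fun s _ => ?_
        simp only [RCLike.inner_apply, starRingEnd_apply, star_trivial]
        rw [mul_comm]; rfl
      linarith
    have hop : opNorm A ≤ 2 * ε :=
      opNorm_le_two_mul A hε0 Nu (Mv S) (hMv1 S) hNucov (hMvcov S) hinner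
    have hopnn : 0 ≤ opNorm A := by rw [opNorm]; exact norm_nonneg _
    have hop2 : opNorm A ^ 2 ≤ 4 * ε ^ 2 := by nlinarith
    have hfin : 4 * ε ^ 2 ≤ 72 * K ^ 2 * N * ν * L := by
      rw [hε2, hBdef]
      have : 72 * K ^ 2 * N * ν * L = 72 * K ^ 2 * P := by rw [hPdef]; ring
      rw [this]
      nlinarith [sq_nonneg K, hdP, hP0]
    exact hop2.trans hfin
  -- conclude
  have h1 : μ Badᶜ ≤ μ {ω | ∀ S : Finset (Fin N), (S.card : ℝ) ≤ ν * N →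
      opNorm (Matrix.of fun (s : {i // i ∈ S}) (j : Fin d) => x s.val ω j) ^ 2 ≤
        72 * K ^ 2 * N * ν * L} := measure_mono hGood
  have h2 : μ Badᶜ = 1 - μ Bad := prob_compl_eq_one_sub hBadMeas
  have hμBadR : (μ Bad).toReal ≤ Real.exp (-(d:ℝ)) :=
    ENNReal.toReal_le_of_le_ofReal (Real.exp_pos _).le hμBad
  have hcompl : (μ Badᶜ).toReal = 1 - (μ Bad).toReal := by
    rw [h2, ENNReal.toReal_sub_of_le prob_le_one ENNReal.one_ne_top, ENNReal.toReal_one]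
  have hmono : (μ Badᶜ).toReal ≤ (μ {ω | ∀ S : Finset (Fin N), (S.card : ℝ) ≤ ν * N →
      opNorm (Matrix.of fun (s : {i // i ∈ S}) (j : Fin d) => x s.val ω j) ^ 2 ≤
        72 * K ^ 2 * N * ν * L}).toReal :=
    ENNReal.toReal_mono (measure_ne_top μ _) h1
  have hexp : 0 < Real.exp (-(d:ℝ)) := Real.exp_pos _
  rw [hcompl] at hmono
  linarith
end
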